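/- arXiv:2009.04159 — 3 statements merged into one kernel-verified Lean document; each statement's English description precedes it below -/
import Mathlib

section
/- For all integers q ≥ 2 and t ≥ 4, every minimal q-Ramsey graph for the cycle C_t has minimum degree at least q+1; equivalently, no minimal q-Ramsey graph for C_t contains a vertex of degree at most q. -/
open SimpleGraph

/-- The edge set `S` (over vertex type `V`) contains a copy of `H`:
there is an injective map sending edges of `H` into `S`. -/
def EdgeSetContains {W V : Type*} (H : SimpleGraph W) (S : Set (Sym2 V)) : Prop :=
  ∃ f : W → V, Function.Injective f ∧ ∀ a b : W, H.Adj a b → s(f a, f b) ∈ S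

/-- The graph `G` contains a subgraph isomorphic to `H`. -/
def ContainsCopy {W V : Type*} (H : SimpleGraph W) (G : SimpleGraph V) : Prop :=
  ∃ f : W → V, Function.Injective f ∧ ∀ a b : W, H.Adj a b → G.Adj (f a) (f b)

/-- A `q`-coloring `c` of the edges of `G` is `H`-free: no color class contains
a monochromatic subgraph isomorphic to `H`. -/
def IsHFree {W V : Type*} (H : SimpleGraph W) (G : SimpleGraph V) {q : ℕ}
    (c : Sym2 V → Fin q) : Prop :=
  ∀ i : Fin q, ¬ EdgeSetContains H {e | e ∈ G.edgeSet ∧ c e = i}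

/-- `G` is `q`-Ramsey for `H`: every `q`-coloring of the edges of `G` contains a
monochromatic copy of `H`. -/
def IsRamseyFor (q : ℕ) {W V : Type*} (H : SimpleGraph W) (G : SimpleGraph V) : Prop :=
  ∀ c : Sym2 V → Fin q, ¬ IsHFree H G c

/-- `G` is minimal `q`-Ramsey for `H`: it is `q`-Ramsey for `H` and no proper
subgraph of `G` is `q`-Ramsey for `H`. -/
def IsMinRamseyFor (q : ℕ) {W V : Type*} (H : SimpleGraph W) (G : SimpleGraph V) : Prop :=
  IsRamseyFor q H G ∧ ∀ G' : G.Subgraph, G' ≠ ⊤ → ¬ IsRamseyFor q H G'.coe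

/-- The degree of a vertex. -/
noncomputable def DegOf {V : Type*} (G : SimpleGraph V) (v : V) : ℕ :=
  (G.neighborSet v).ncard

/-- The minimum degree of a graph. -/
noncomputable def MinDegOf {V : Type*} (G : SimpleGraph V) : ℕ :=
  sInf (Set.range (DegOf G))

/-- `sRamsey q H` is the parameter `s_q(H)`: the smallest minimum degree of a
minimal `q`-Ramsey graph for `H`. -/
noncomputable def sRamsey (q : ℕ) {W : Type*} (H : SimpleGraph W) : ℕ :=
  sInf {d | ∃ (n : ℕ) (G : SimpleGraph (Fin n)), IsMinRamseyFor q H G ∧ MinDegOf G = d}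

/-- The `q`-color Ramsey number of `H`: the least `n` such that `K_n` is
`q`-Ramsey for `H`. -/
noncomputable def ramseyNumber (q : ℕ) {W : Type*} (H : SimpleGraph W) : ℕ :=
  sInf {n | IsRamseyFor q H (completeGraph (Fin n))}

/-- `H` is `s_q`-abundant: for every `k ≥ 1` there is a minimal `q`-Ramsey graph
for `H` with at least `k` vertices of degree `s_q(H)`. -/
def SAbundant (q : ℕ) {W : Type*} (H : SimpleGraph W) : Prop :=
  ∀ k : ℕ, 1 ≤ k → ∃ (n : ℕ) (G : SimpleGraph (Fin n)),
    IsMinRamseyFor q H G ∧ k ≤ {v | DegOf G v = sRamsey q H}.ncard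

/-- A graph is 3-connected if it has more than 3 vertices and removing any at
most 2 vertices leaves it connected. -/
def ThreeConnected {W : Type*} (H : SimpleGraph W) : Prop :=
  3 < Nat.card W ∧ ∀ s : Set W, s.ncard ≤ 2 → (SimpleGraph.induce (sᶜ) H).Connected

/-- The (unordered) color pattern induced by a coloring `c` on the graph `G`:
the set of its color classes on `E(G)`. -/
def PatternOf {V : Type*} (G : SimpleGraph V) {q : ℕ}
    (c : Sym2 V → Fin q) : Set (Set (Sym2 V)) :=
  Set.range fun i : Fin q => {e | e ∈ G.edgeSet ∧ c e = i}

/-- `P` is a `q`-color pattern for `G`: a partition of `E(G)` into the color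
classes of some `q`-coloring. -/
def IsPattern {V : Type*} (G : SimpleGraph V) (q : ℕ) (P : Set (Set (Sym2 V))) : Prop :=
  ∃ c : Sym2 V → Fin q, P = PatternOf G c

/-- A pattern is `H`-free if no part contains a copy of `H`. -/
def IsHFreePattern {W V : Type*} (H : SimpleGraph W) (P : Set (Set (Sym2 V))) : Prop :=
  ∀ S ∈ P, ¬ EdgeSetContains H S

/-- The pair `(P, V₀)` is `H`-robust: in any graph `P'` obtained from `P` by adding a set `S`
of new vertices and any collection of edges within `S ∪ V₀`, every copy of `H` is entirely
contained either in `P` or in the subgraph induced by `S ∪ V₀`. -/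
def HRobust {W U : Type*} (H : SimpleGraph W) (P : SimpleGraph U) (V₀ : Set U) : Prop :=
  ∀ (S : Type) (P' : SimpleGraph (U ⊕ S)),
    (∀ a b : U, P.Adj a b → P'.Adj (Sum.inl a) (Sum.inl b)) →
    (∀ a b : U, P'.Adj (Sum.inl a) (Sum.inl b) → P.Adj a b ∨ (a ∈ V₀ ∧ b ∈ V₀)) →
    (∀ (s : S) (a : U), P'.Adj (Sum.inr s) (Sum.inl a) → a ∈ V₀) →
    ∀ f : W → U ⊕ S, Function.Injective f →
      (∀ a b : W, H.Adj a b → P'.Adj (f a) (f b)) →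
      (∃ g : W → U, (∀ w, f w = Sum.inl (g w)) ∧
        ∀ a b : W, H.Adj a b → P.Adj (g a) (g b)) ∨
      (∀ w : W, (∃ a ∈ V₀, f w = Sum.inl a) ∨ ∃ s : S, f w = Sum.inr s)

/-- The graph `K_t · K_2`: a clique on `t` vertices (the vertices `< t`) together with a
pendant vertex (the vertex `t`) attached to the clique vertex `0`. -/
def cliquePendant (t : ℕ) : SimpleGraph (Fin (t + 1)) :=
  SimpleGraph.fromRel fun a b => (a.val < t ∧ b.val < t) ∨ (a.val = t ∧ b.val = 0)

/-- The graph obtained from the cycle `C_k` by attaching a distinct pendant vertex to each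
cycle vertex. -/
def sunGraph (k : ℕ) : SimpleGraph (Fin k ⊕ Fin k) :=
  SimpleGraph.fromRel fun a b =>
    match a, b with
    | Sum.inl i, Sum.inl j => (SimpleGraph.cycleGraph k).Adj i j
    | Sum.inl i, Sum.inr j => i = j
    | _, _ => False

/-!
If a vertex `v` had degree at most `q`, minimality would give a colouring of `G - v` without a
monochromatic `C_t`; extend it by giving the at most `q` edges at `v` pairwise distinct colours.
A monochromatic `C_t` through `v` would use two edges at `v`, because every vertex of `C_t` has
two distinct neighbours, so `G` would not be `q`-Ramsey for `C_t`.
-/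

section

variable {W V : Type*} {H : SimpleGraph W} {G : SimpleGraph V} {q : ℕ} {v : V}

theorem cycleGraph_exists_adj_adj_ne {t : ℕ} (ht : 3 ≤ t) (w : Fin t) :
    ∃ a b, (cycleGraph t).Adj w a ∧ (cycleGraph t).Adj w b ∧ a ≠ b := by
  obtain ⟨n, rfl⟩ : ∃ n, t = n + 3 := ⟨t - 3, by omega⟩
  refine ⟨w - 1, w + 1, by simp [← mem_neighborSet, cycleGraph_neighborSet],
    by simp [← mem_neighborSet, cycleGraph_neighborSet], ?_⟩
  rw [ne_eq, sub_eq_iff_eq_add, add_assoc, left_eq_add, Fin.ext_iff]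
  simp [Fin.val_add, Nat.mod_eq_of_lt (show 2 < n + 3 by omega)]

theorem exists_injOn_incidenceSet (hv : (G.neighborSet v).Finite) (hdeg : DegOf G v ≤ q)
    (hq : 0 < q) : ∃ c : Sym2 V → Fin q, Set.InjOn c (G.incidenceSet v) := by
  classical
  have : Nonempty (Fin q) := ⟨⟨0, hq⟩⟩
  have hinc : (G.incidenceSet v).encard = (G.neighborSet v).encard :=
    Set.encard_congr (G.incidenceSetEquivNeighborSet v)
  obtain ⟨c, -, hc⟩ := Set.Finite.exists_injOn_of_encard_le (t := (Set.univ : Set (Fin q)))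
    (Set.finite_of_encard_eq_coe (hinc.trans hv.cast_ncard_eq.symm))
    (by rw [hinc, ← hv.cast_ncard_eq, Set.encard_univ, ENat.card_eq_coe_fintype_card,
      Fintype.card_fin]; exact_mod_cast hdeg)
  exact ⟨c, hc⟩

theorem apply_ne_of_injOn_incidenceSet (hH : ∀ w, ∃ a b, H.Adj w a ∧ H.Adj w b ∧ a ≠ b)
    {c : Sym2 V → Fin q} (hc : Set.InjOn c (G.incidenceSet v)) {i : Fin q} {f : W → V}
    (hf : Function.Injective f)
    (hcopy : ∀ a b, H.Adj a b → s(f a, f b) ∈ {e | e ∈ G.edgeSet ∧ c e = i}) (w : W) :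
    f w ≠ v := by
  rintro rfl
  obtain ⟨a, b, ha, hb, hab⟩ := hH w
  obtain ⟨ha', hca⟩ := hcopy w a ha
  obtain ⟨hb', hcb⟩ := hcopy w b hb
  have : s(f w, f a) = s(f w, f b) :=
    hc ⟨ha', Sym2.mem_mk_left _ _⟩ ⟨hb', Sym2.mem_mk_left _ _⟩ (hca.trans hcb.symm)
  exact hab (hf (Sym2.congr_right.mp this))

theorem IsRamseyFor.deleteVerts_singleton (hH : ∀ w, ∃ a b, H.Adj w a ∧ H.Adj w b ∧ a ≠ b)
    (hv : (G.neighborSet v).Finite) (hdeg : DegOf G v ≤ q) (hq : 0 < q)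
    (hG : IsRamseyFor q H G) : IsRamseyFor q H ((⊤ : G.Subgraph).deleteVerts {v}).coe := by
  intro c' hc'
  obtain ⟨star, hstar⟩ := exists_injOn_incidenceSet hv hdeg hq
  -- edges at `v` are not images of edges of `G - v`, so on them `c` is the rainbow `star`
  set c := Function.extend (Sym2.map (↑)) c' star
  have hc : Set.InjOn c (G.incidenceSet v) := by
    refine hstar.congr fun e he => (Function.extend_apply' _ _ _ ?_).symm
    rintro ⟨e', rfl⟩
    obtain ⟨x, -, hx⟩ := Sym2.mem_map.mp he.2
    exact x.2.2 hx
  refine hG c fun i ⟨f, hf, hcopy⟩ => hc' i ?_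
  have hfv := apply_ne_of_injOn_incidenceSet hH hc hf hcopy
  refine ⟨fun w => ⟨f w, by simp [hfv w]⟩, fun a b hab => hf (congrArg Subtype.val hab),
    fun a b hab => ⟨?_, ?_⟩⟩
  · obtain ⟨he, -⟩ := hcopy a b hab
    simpa [hfv a, hfv b] using he
  · obtain ⟨-, hca⟩ := hcopy a b hab
    rw [← hca]
    exact ((Sym2.map.injective Subtype.val_injective).extend_apply c' star _).symm

theorem IsMinRamseyFor.add_one_le_degOf (hH : ∀ w, ∃ a b, H.Adj w a ∧ H.Adj w b ∧ a ≠ b)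
    (hq : 0 < q) (hG : IsMinRamseyFor q H G) (hv : (G.neighborSet v).Finite) :
    q + 1 ≤ DegOf G v := by
  by_contra! hdeg
  have hne : (⊤ : G.Subgraph).deleteVerts {v} ≠ ⊤ := fun h => by
    simpa using congrArg (v ∈ ·.verts) h
  exact hG.2 _ hne (hG.1.deleteVerts_singleton hH hv (by omega) hq)

end

/-- For all `q ≥ 2` and `t ≥ 4`, every minimal `q`-Ramsey graph for `C_t`
has minimum degree at least `q + 1`, i.e. no vertex has degree at most `q`. -/
theorem min_ramsey_cycle_min_degree (q t : ℕ) (hq : 2 ≤ q) (ht : 4 ≤ t)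
    {V : Type} [Fintype V] (G : SimpleGraph V)
    (hG : IsMinRamseyFor q (cycleGraph t) G) :
    ∀ v : V, q + 1 ≤ DegOf G v := fun _ =>
  hG.add_one_le_degOf (cycleGraph_exists_adj_adj_ne (by omega)) (by omega) (Set.toFinite _)
end

section
/- For all integers q ≥ 2 and t ≥ 3, there exists a K_t-free coloring of the edges of the complete graph K_{(t−1)^q} with q colors that cannot be extended to a K_t-free q-coloring of K_{(t−1)^q + 1}; that is, every q-coloring of the edges of the complete graph on (t−1)^q + 1 vertices whose restriction to the complete graph on some fixed set of (t−1)^q of these vertices agrees with the given coloring contains a monochromatic copy of K_t. -/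
open SimpleGraph

/-!
Identify the vertices of `K_{(t-1)^q}` with the words of length `q` over an alphabet of `t - 1`
letters and color an edge `xy` by the first position at which `x` and `y` differ. A clique of
color `i` consists of words with pairwise distinct `i`-th letters, so it has at most `t - 1`
vertices.

Now color the edges from a new vertex `w` arbitrarily. Descend through the trie of words: at a
node of depth `i`, if every one of its `t - 1` subtrees contains a word joined to `w` in color
`i`, these words form a clique of color `i` together with `w`, a `K_t`. Otherwise some subtree
avoids color `i` from `w` and we descend into it. After `q` steps we reach a word whose edge to
`w` has no color at all, which is absurd.
-/

open Function

section Transport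

variable {W W' V V' : Type*}

theorem EdgeSetContains.comap {H : SimpleGraph W} {H' : SimpleGraph W'} {S : Set (Sym2 V)}
    (φ : H' ↪g H) (h : EdgeSetContains H S) : EdgeSetContains H' S := by
  obtain ⟨f, hf, hS⟩ := h
  exact ⟨f ∘ φ, hf.comp φ.injective, fun a b hab => hS _ _ (φ.map_rel_iff.2 hab)⟩

theorem IsHFree.comap_top {H : SimpleGraph W} {q : ℕ} {c : Sym2 V → Fin q}
    (hc : IsHFree H ⊤ c) {g : V' → V} (hg : Injective g) : IsHFree H ⊤ (c ∘ Sym2.map g) := by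
  rintro i ⟨f, hf, hS⟩
  refine hc i ⟨g ∘ f, hg.comp hf, fun a b hab => ?_⟩
  obtain ⟨hab', hci⟩ := hS a b hab
  simp only [mem_edgeSet, top_adj, Set.mem_ofPred_eq, comp_apply, Sym2.map_mk] at hab' hci ⊢
  exact ⟨hg.ne hab', hci⟩

end Transport

section FirstDiff

variable {ι α : Type*} [LinearOrder ι] [Fintype ι] [Nonempty ι]

open Classical in
/-- The value at `x = y` is junk. -/
noncomputable def firstDiff (x y : ι → α) : ι :=
  if h : ∃ i, x i ≠ y i then
    (Finset.univ.filter fun i => x i ≠ y i).min' (Finset.filter_nonempty_iff.2 (by simpa using h))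
  else Classical.arbitrary ι

theorem isLeast_firstDiff {x y : ι → α} (h : x ≠ y) :
    IsLeast {i | x i ≠ y i} (firstDiff x y) := by
  classical
  rw [firstDiff, dif_pos (ne_iff.mp h)]
  convert Finset.isLeast_min' _ _
  simp

theorem firstDiff_comm (x y : ι → α) : firstDiff x y = firstDiff y x := by
  by_cases h : x = y
  · rw [h]
  · refine (isLeast_firstDiff h).unique ?_
    simpa only [ne_comm] using isLeast_firstDiff (Ne.symm h)

theorem firstDiff_eq {x y : ι → α} {i : ι} (hi : x i ≠ y i) (hlt : ∀ j < i, x j = y j) :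
    firstDiff x y = i :=
  (isLeast_firstDiff fun h => hi (congrFun h i)).unique
    ⟨hi, fun j hj => not_lt.1 fun hji => hj (hlt j hji)⟩

noncomputable def firstDiffColoring : Sym2 (ι → α) → ι :=
  Sym2.lift ⟨firstDiff, firstDiff_comm⟩

end FirstDiff

theorem isHFree_top_firstDiffColoring {q : ℕ} [Nonempty (Fin q)] {α W : Type*} [Fintype α]
    [Fintype W] (hW : Fintype.card α < Fintype.card W) :
    IsHFree (⊤ : SimpleGraph W) ⊤ (firstDiffColoring : Sym2 (Fin q → α) → Fin q) := by
  rintro i ⟨f, hf, hS⟩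
  have hinj : Injective fun a => f a i := by
    intro a b hab
    by_contra hne
    obtain ⟨hne', hci⟩ := hS a b hne
    simp only [mem_edgeSet, top_adj, firstDiffColoring, Sym2.lift_mk] at hne' hci
    exact (isLeast_firstDiff hne').1 (hci ▸ hab)
  exact hW.not_ge (Fintype.card_le_of_injective _ hinj)

section Trie

variable {q : ℕ} {α : Type*} [Nonempty α]

theorem exists_prefix_le_col (col : (Fin q → α) → Fin q)
    (hblock : ∀ (i : Fin q) (p : Fin q → α), ∃ v, ∀ x : Fin q → α,
      (∀ j < i, x j = p j) → x i = v → col x ≠ i) :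
    ∀ k ≤ q, ∃ p : Fin q → α, ∀ x : Fin q → α, (∀ j : Fin q, (j : ℕ) < k → x j = p j) →
      k ≤ col x := by
  intro k
  induction k with
  | zero => exact fun _ => ⟨fun _ => Classical.arbitrary α, fun _ _ => Nat.zero_le _⟩
  | succ k ih =>
    intro hk
    obtain ⟨p, hp⟩ := ih (by omega)
    obtain ⟨v, hv⟩ := hblock ⟨k, hk⟩ p
    refine ⟨update p ⟨k, hk⟩ v, fun x hx => ?_⟩
    have hbelow : ∀ j : Fin q, (j : ℕ) < k → x j = p j := fun j hj => by
      rw [hx j (by omega), update_of_ne (Fin.ne_of_lt hj)]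
    have hcol_ne : col x ≠ ⟨k, hk⟩ :=
      hv x (fun j hj => hbelow j hj) (by rw [hx _ (by simp), update_self])
    have := hp x hbelow
    have : (col x : ℕ) ≠ k := fun h => hcol_ne (Fin.ext h)
    omega

theorem exists_prefix_forall_letter_col_eq (col : (Fin q → α) → Fin q) :
    ∃ (i : Fin q) (p : Fin q → α), ∀ v : α, ∃ x : Fin q → α,
      (∀ j < i, x j = p j) ∧ x i = v ∧ col x = i := by
  by_contra! hblock
  obtain ⟨p, hp⟩ := exists_prefix_le_col col hblock q le_rfl
  exact (col p).isLt.not_ge (hp p fun _ _ => rfl)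

theorem exists_mono_clique_of_extends_firstDiff [Nonempty (Fin q)] {V : Type*}
    (g : (Fin q → α) → V) (hg : Injective g) (w : V) (hw : ∀ x, g x ≠ w) (c : Sym2 V → Fin q)
    (hc : ∀ x y, x ≠ y → c s(g x, g y) = firstDiff x y) :
    ∃ i, EdgeSetContains (⊤ : SimpleGraph (Option α))
      {e | e ∈ (⊤ : SimpleGraph V).edgeSet ∧ c e = i} := by
  obtain ⟨i, p, hp⟩ := exists_prefix_forall_letter_col_eq fun x => c s(w, g x)
  choose X hXp hXi hXcol using hp
  have hXinj : Injective X := fun u v huv => (hXi u).symm.trans ((congrFun huv i).trans (hXi v))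
  have hXdiff : ∀ u v, u ≠ v → firstDiff (X u) (X v) = i := fun u v huv =>
    firstDiff_eq (by rwa [hXi, hXi]) fun j hj => (hXp u j hj).trans (hXp v j hj).symm
  refine ⟨i, fun o => o.elim w (g ∘ X), ?_, ?_⟩
  · rintro (_ | u) (_ | v) huv
    · rfl
    · exact absurd huv.symm (hw _)
    · exact absurd huv (hw _)
    · exact congrArg some (hXinj (hg huv))
  · rintro (_ | u) (_ | v) huv
    · exact absurd rfl huv
    · exact ⟨(hw _).symm, hXcol v⟩
    · exact ⟨hw _, by rw [Sym2.eq_swap]; exact hXcol u⟩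
    · have huv' : u ≠ v := fun h => huv (congrArg some h)
      exact ⟨hg.ne (hXinj.ne huv'), (hc _ _ (hXinj.ne huv')).trans (hXdiff u v huv')⟩

end Trie

/-- For all `q ≥ 2` and `t ≥ 3`, there is a `K_t`-free `q`-coloring of the
edges of `K_{(t-1)^q}` that cannot be extended to a `K_t`-free `q`-coloring of
`K_{(t-1)^q + 1}`: every `q`-coloring of the complete graph on `(t-1)^q + 1` vertices
agreeing with it on the first `(t-1)^q` vertices contains a monochromatic copy of `K_t`. -/
theorem unextendable_Kt_free_coloring (q t : ℕ) (hq : 2 ≤ q) (ht : 3 ≤ t) :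
    ∃ c : Sym2 (Fin ((t - 1) ^ q)) → Fin q,
      IsHFree (completeGraph (Fin t)) (completeGraph (Fin ((t - 1) ^ q))) c ∧
      ∀ c' : Sym2 (Fin ((t - 1) ^ q + 1)) → Fin q,
        (∀ a b : Fin ((t - 1) ^ q), c' s(a.castSucc, b.castSucc) = c s(a, b)) →
        ¬ IsHFree (completeGraph (Fin t)) (completeGraph (Fin ((t - 1) ^ q + 1))) c' := by
  have : Nonempty (Fin q) := ⟨⟨0, by omega⟩⟩
  have : Nonempty (Fin (t - 1)) := ⟨⟨0, by omega⟩⟩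
  let e : (Fin q → Fin (t - 1)) ≃ Fin ((t - 1) ^ q) := Fintype.equivFinOfCardEq (by simp)
  refine ⟨firstDiffColoring ∘ Sym2.map e.symm,
    (isHFree_top_firstDiffColoring (by simp only [Fintype.card_fin]; omega)).comap_top e.symm.injective,
    fun c' hc' hfree => ?_⟩
  obtain ⟨i, hi⟩ := exists_mono_clique_of_extends_firstDiff (fun x => (e x).castSucc)
    ((Fin.castSucc_injective _).comp e.injective) (Fin.last _) (fun _ => Fin.castSucc_ne_last _)
    c' fun x y _ => by simp [hc', firstDiffColoring]
  exact hfree i (hi.comap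
    (Iso.completeGraph ((finCongr (by omega)).trans (finSuccEquiv (t - 1)))).toEmbedding)
end

section
/- Let q ≥ 2 be an integer and let H be a graph with no isolated vertices and at least one edge. Then every minimal q-Ramsey graph G for H satisfies δ(G) ≥ q(δ(H)−1)+1, where δ denotes minimum degree; in particular, s_q(H) ≥ q(δ(H)−1)+1. -/
open SimpleGraph

/-!
If a vertex `v` of a minimal `q`-Ramsey graph `G` for `H` had degree at most `q (δ(H) - 1)`,
color `G - v` without a monochromatic `H` (possible by minimality) and split the edges at `v`
into `q` color classes of at most `δ(H) - 1` edges each. A monochromatic copy of `H` through `v`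
would need `δ(H)` edges of one color at `v`, and a copy avoiding `v` lies in `G - v`, so `G`
would not be Ramsey. For `s_q(H)` one also needs a minimal `q`-Ramsey graph to exist, which
follows from the multicolor Ramsey theorem for cliques.
-/

open Finset

/-- Greedy form of Ramsey's theorem: fix a vertex and recurse into its largest monochromatic
neighborhood. -/
theorem exists_seq_color_eq_of_lt (q m : ℕ) :
    ∃ n, ∀ (V : Type) [Fintype V], n ≤ Fintype.card V → ∀ c : Sym2 V → Fin q,
      ∃ (x : Fin m ↪ V) (χ : Fin m → Fin q), ∀ a b, a < b → c s(x a, x b) = χ a := by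
  classical
  induction m with
  | zero => exact ⟨0, fun V _ _ c => ⟨Function.Embedding.ofIsEmpty, Fin.elim0, fun a => a.elim0⟩⟩
  | succ m ih =>
    obtain ⟨n, hn⟩ := ih
    refine ⟨q * n + 1, fun V _ hV c => ?_⟩
    obtain ⟨v⟩ : Nonempty V := Fintype.card_pos_iff.mp (by omega)
    have : Nonempty (Fin q) := ⟨c s(v, v)⟩
    obtain ⟨i, -, hi⟩ := exists_le_card_fiber_of_mul_le_card_of_maps_to
      (s := univ.erase v) (t := univ) (f := fun u => c s(v, u)) (n := n)
      (fun _ _ => mem_univ _) univ_nonempty (by simp [card_erase_of_mem]; omega)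
    set S := (univ.erase v).filter fun u => c s(v, u) = i
    obtain ⟨x, χ, hx⟩ := hn S (by simpa using hi) (c ∘ Sym2.map Subtype.val)
    refine ⟨⟨Fin.cons v fun a => (x a : V), Fin.cons_injective_iff.mpr ⟨?_, ?_⟩⟩,
      Fin.cons i χ, fun a b hab => ?_⟩
    · rintro ⟨a, ha⟩
      simpa [S, ha] using (x a).2
    · exact Subtype.val_injective.comp x.injective
    · induction b using Fin.cases with
      | zero => exact absurd hab (Fin.not_lt_zero a)
      | succ b =>
        induction a using Fin.cases with
        | zero => simpa using (mem_filter.mp (x b).2).2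
        | succ a => simpa using hx a b (Fin.succ_lt_succ_iff.mp hab)

theorem exists_monochromatic_clique (q k : ℕ) :
    ∃ n, ∀ c : Sym2 (Fin n) → Fin q, ∃ (i : Fin q) (x : Fin k ↪ Fin n),
      ∀ a b, a ≠ b → c s(x a, x b) = i := by
  obtain ⟨n, hn⟩ := exists_seq_color_eq_of_lt q (q * k)
  refine ⟨n + 1, fun c => ?_⟩
  have : Nonempty (Fin q) := ⟨c s(0, 0)⟩
  obtain ⟨x, χ, hx⟩ := hn (Fin (n + 1)) (by simp) c
  obtain ⟨i, -, hi⟩ := exists_le_card_fiber_of_mul_le_card_of_maps_to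
    (s := univ) (t := univ) (f := χ) (n := k) (fun _ _ => mem_univ _) univ_nonempty (by simp)
  set y := orderEmbOfCardLe _ hi
  have hy : ∀ a, χ (y a) = i := fun a => (mem_filter.mp (orderEmbOfCardLe_mem _ hi a)).2
  refine ⟨i, y.toEmbedding.trans x, fun a b hab => ?_⟩
  rcases hab.lt_or_gt with h | h
  · simpa [hy] using hx _ _ (y.strictMono h)
  · rw [Sym2.eq_swap]
    simpa [hy] using hx _ _ (y.strictMono h)

theorem exists_fin_fiber_ncard_le {α : Type*} {s : Set α} (hs : s.Finite) {q d : ℕ} (hq : 0 < q)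
    (h : s.ncard ≤ q * d) : ∃ p : α → Fin q, ∀ i, {a ∈ s | p a = i}.ncard ≤ d := by
  classical
  have := hs.fintype
  obtain ⟨e⟩ : Nonempty (s ↪ Fin q × Fin d) := Function.Embedding.nonempty_of_card_le <| by
    rwa [Fintype.card_prod, Fintype.card_fin, Fintype.card_fin, ← Nat.card_eq_fintype_card,
      Nat.card_coe_set_eq]
  let p : α → Fin q := fun a => if ha : a ∈ s then (e ⟨a, ha⟩).1 else ⟨0, hq⟩
  refine ⟨p, fun i => ?_⟩
  rw [← Nat.card_coe_set_eq]
  refine (Nat.card_le_card_of_injective (fun a : {a ∈ s | p a = i} => (e ⟨a, a.2.1⟩).2)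
    fun a b hab => ?_).trans (Nat.card_fin d).le
  have ha := a.2.2
  have hb := b.2.2
  simp only [p, dif_pos a.2.1, dif_pos b.2.1] at ha hb
  simpa [Subtype.ext_iff] using e.injective (Prod.ext (ha.trans hb.symm) hab)

section

variable {q : ℕ} {W V V' : Type*} {H : SimpleGraph W} {G : SimpleGraph V}

theorem minDegOf_le_degOf (G : SimpleGraph V) (v : V) : MinDegOf G ≤ DegOf G v :=
  Nat.sInf_le ⟨v, rfl⟩

theorem exists_degOf_eq_minDegOf [Nonempty V] (G : SimpleGraph V) :
    ∃ v, DegOf G v = MinDegOf G :=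
  Nat.sInf_mem (Set.range_nonempty _)

theorem minDegOf_pos [Nonempty V] (h : ∀ v, 0 < DegOf G v) : 0 < MinDegOf G := by
  obtain ⟨v, hv⟩ := exists_degOf_eq_minDegOf G
  exact hv ▸ h v

theorem nonempty_of_minDegOf_pos (h : 0 < MinDegOf G) : Nonempty V := by
  by_contra hV
  rw [not_nonempty_iff] at hV
  simp [MinDegOf, Set.range_eq_empty] at h

theorem IsRamseyFor.of_copy {G' : SimpleGraph V'} (f : Copy G G') (h : IsRamseyFor q H G) :
    IsRamseyFor q H G' := by
  intro c hc
  refine h (c ∘ Sym2.map f) fun i ⟨g, hg, hcopy⟩ =>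
    hc i ⟨f ∘ g, f.injective.comp hg, fun a b hab => ?_⟩
  obtain ⟨hadj, hcol⟩ := hcopy a b hab
  exact ⟨f.toHom.map_adj hadj, hcol⟩

theorem IsRamseyFor.nonempty [Nonempty W] (h : IsRamseyFor q H G) : Nonempty V := by
  by_contra hV
  rw [not_nonempty_iff] at hV
  exact h isEmptyElim fun i ⟨f, _⟩ => isEmptyElim (f (Classical.arbitrary W))

theorem exists_isRamseyFor_completeGraph [Finite W] (q : ℕ) (H : SimpleGraph W) :
    ∃ n, IsRamseyFor q H (completeGraph (Fin n)) := by
  have := Fintype.ofFinite W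
  obtain ⟨n, hn⟩ := exists_monochromatic_clique q (Fintype.card W)
  refine ⟨n, fun c hc => ?_⟩
  obtain ⟨i, x, hx⟩ := hn c
  let f : W ↪ Fin n := (Fintype.equivFin W).toEmbedding.trans x
  exact hc i ⟨f, f.injective, fun a b hab =>
    ⟨f.injective.ne hab.ne, hx _ _ ((Fintype.equivFin W).injective.ne hab.ne)⟩⟩

/- Minimize first the number of vertices, then the number of edges: a proper subgraph either
spans all vertices and has fewer edges, or has fewer vertices. -/
theorem exists_isMinRamseyFor [Finite W] (q : ℕ) (H : SimpleGraph W) :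
    ∃ (n : ℕ) (G : SimpleGraph (Fin n)), IsMinRamseyFor q H G := by
  classical
  have hex : ∃ n, ∃ G : SimpleGraph (Fin n), IsRamseyFor q H G :=
    (exists_isRamseyFor_completeGraph q H).imp fun n h => ⟨_, h⟩
  obtain ⟨G, hG, hGmin⟩ :=
    Set.exists_min_image {G : SimpleGraph (Fin (Nat.find hex)) | IsRamseyFor q H G}
      (fun G => G.edgeSet.ncard) (Set.toFinite _) (Nat.find_spec hex)
  refine ⟨_, G, hG, fun G' hG' hR => ?_⟩
  by_cases hverts : G'.verts = Set.univ
  · have hlt : G'.spanningCoe < G := G'.spanningCoe_le.lt_of_ne fun h =>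
      hG' (Subgraph.ext hverts (Subgraph.spanningCoe_inj.mp h))
    have hle := hGmin _ (hR.of_copy
      (⟨⟨Subtype.val, id⟩, Subtype.val_injective⟩ : Copy G'.coe G'.spanningCoe))
    exact (Set.ncard_lt_ncard (edgeSet_ssubset_edgeSet.mpr hlt) (Set.toFinite _)).not_ge hle
  · obtain ⟨v, hv⟩ := (Set.ne_univ_iff_exists_notMem _).mp hverts
    obtain ⟨m, ⟨e⟩⟩ := Finite.exists_equiv_fin G'.verts
    have hm : m < Nat.find hex := by
      have := Finite.card_subtype_lt (p := (· ∈ G'.verts)) hv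
      rwa [Nat.card_congr e, Nat.card_fin, Nat.card_fin] at this
    exact Nat.find_min hex hm ⟨_, hR.of_copy (Iso.map e G'.coe).toCopy⟩

open Classical in
/-- Edges meeting neither `v` nor `U` get the junk color `p v`. -/
noncomputable def extendColoringAt {U : Set V} (v : V) (p : V → Fin q) (c' : Sym2 U → Fin q) :
    Sym2 V → Fin q := fun e =>
  if h : v ∈ e then p (Sym2.Mem.other h)
  else Function.extend (Sym2.map Subtype.val) c' (fun _ => p v) e

theorem extendColoringAt_mk {U : Set V} (v u : V) (p : V → Fin q) (c' : Sym2 U → Fin q) :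
    extendColoringAt v p c' s(v, u) = p u := by
  rw [extendColoringAt, dif_pos (Sym2.mem_mk_left v u)]
  exact congrArg p (Sym2.congr_right.mp (Sym2.other_spec _))

theorem extendColoringAt_map {U : Set V} {v : V} (hv : v ∉ U) (p : V → Fin q)
    (c' : Sym2 U → Fin q) (e : Sym2 U) :
    extendColoringAt v p c' (e.map Subtype.val) = c' e := by
  have hve : v ∉ e.map Subtype.val := by
    induction e using Sym2.ind with
    | _ a b => simp only [Sym2.map_mk, Sym2.mem_iff]; rintro (h | h) <;> exact hv (h ▸ (by simp))
  rw [extendColoringAt, dif_neg hve, (Sym2.map.injective Subtype.val_injective).extend_apply]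

theorem isHFree_extendColoringAt [Finite V] {v : V} {p : V → Fin q}
    {c' : Sym2 ((⊤ : G.Subgraph).deleteVerts {v}).verts → Fin q}
    (hc' : IsHFree H ((⊤ : G.Subgraph).deleteVerts {v}).coe c')
    (hp : ∀ i, {u ∈ G.neighborSet v | p u = i}.ncard < MinDegOf H) :
    IsHFree H G (extendColoringAt v p c') := by
  rintro i ⟨f, hf, hcopy⟩
  by_cases hv : ∃ w, f w = v
  · obtain ⟨w, rfl⟩ := hv
    refine (hp i).not_ge ((minDegOf_le_degOf H w).trans
      (Set.ncard_le_ncard_of_injOn f (fun w' hw' => ?_) hf.injOn (Set.toFinite _)))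
    obtain ⟨hadj, hcol⟩ := hcopy w w' hw'
    exact ⟨hadj, by rwa [extendColoringAt_mk] at hcol⟩
  · push Not at hv
    refine hc' i ⟨fun w => ⟨f w, by simp [hv w]⟩, fun a b h => hf (congrArg Subtype.val h),
      fun a b hab => ?_⟩
    obtain ⟨hadj, hcol⟩ := hcopy a b hab
    refine ⟨by simpa [hv a, hv b] using hadj, ?_⟩
    rwa [← extendColoringAt_map (v := v) (by simp) p c']

theorem IsMinRamseyFor.lt_degOf [Finite V] (hq : 0 < q) (hH : 0 < MinDegOf H)
    (hG : IsMinRamseyFor q H G) (v : V) : q * (MinDegOf H - 1) < DegOf G v := by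
  by_contra! hdeg
  have hne : (⊤ : G.Subgraph).deleteVerts {v} ≠ ⊤ := fun h => by
    simpa using congrArg (v ∈ ·.verts) h
  obtain ⟨c', hc'⟩ := not_forall_not.mp (hG.2 _ hne)
  obtain ⟨p, hp⟩ := exists_fin_fiber_ncard_le (Set.toFinite (G.neighborSet v)) hq hdeg
  exact hG.1 _ (isHFree_extendColoringAt hc' fun i => (hp i).trans_lt (by omega))

theorem IsMinRamseyFor.lt_minDegOf [Finite V] (hq : 0 < q) (hH : 0 < MinDegOf H)
    (hG : IsMinRamseyFor q H G) : q * (MinDegOf H - 1) < MinDegOf G := by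
  have := nonempty_of_minDegOf_pos hH
  have := hG.1.nonempty
  obtain ⟨v, hv⟩ := exists_degOf_eq_minDegOf G
  exact hv ▸ hG.lt_degOf hq hH v

end

/-- For `q ≥ 2` and a graph `H` with no isolated vertices and at least one
edge, every minimal `q`-Ramsey graph `G` for `H` satisfies `δ(G) ≥ q(δ(H) - 1) + 1`;
in particular `s_q(H) ≥ q(δ(H) - 1) + 1`. -/
theorem min_degree_lower_bound (q : ℕ) (hq : 2 ≤ q)
    {W : Type} [Fintype W] (H : SimpleGraph W)
    (hIso : ∀ w : W, 0 < DegOf H w) (hEdge : H.edgeSet.Nonempty) :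
    (∀ (V : Type) [Fintype V] (G : SimpleGraph V), IsMinRamseyFor q H G →
      q * (MinDegOf H - 1) + 1 ≤ MinDegOf G) ∧
    q * (MinDegOf H - 1) + 1 ≤ sRamsey q H := by
  obtain ⟨⟨w, -⟩, -⟩ := hEdge
  have : Nonempty W := ⟨w⟩
  have hH : 0 < MinDegOf H := minDegOf_pos hIso
  have hbound : ∀ (V : Type) [Fintype V] (G : SimpleGraph V), IsMinRamseyFor q H G →
      q * (MinDegOf H - 1) + 1 ≤ MinDegOf G := fun _ _ _ hG => hG.lt_minDegOf (by omega) hH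
  obtain ⟨n, G, hG⟩ := exists_isMinRamseyFor q H
  exact ⟨hbound, le_csInf ⟨_, n, G, hG, rfl⟩ fun _ ⟨_, G', hG', hd⟩ => hd ▸ hbound _ G' hG'⟩
end
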